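/- arXiv:2206.14446 — 4 statements merged into one kernel-verified Lean document; each statement's English description precedes it below -/
import Mathlib

section
/- Let N be a positive natural number, let w ∈ ℝ^N and let μ > 0. The function h : ℝ^N → ℝ defined by h(g) = (μ/2)·‖w − g‖₂² + ‖g‖₁ has a unique global minimizer g* ∈ ℝ^N, given componentwise by the soft-thresholding operator with threshold 1/μ: for each i, g*_i = sign(w_i)·max(|w_i| − 1/μ, 0) (equivalently, g*_i = w_i·max(1 − 1/(μ·|w_i|), 0) when w_i ≠ 0, and g*_i = 0 when w_i = 0). -/
private lemma scalar_key (μ a x : ℝ) (hμ : 0 < μ) :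
    μ/2*(a - Real.sign a * max (|a| - 1/μ) 0)^2 + |Real.sign a * max (|a| - 1/μ) 0|
      + μ/2*(x - Real.sign a * max (|a| - 1/μ) 0)^2
    ≤ μ/2*(a - x)^2 + |x| := by
  rcases lt_trichotomy a 0 with ha | ha | ha
  · rw [Real.sign_of_neg ha, abs_of_neg ha]
    rcases le_or_gt (-a) (1/μ) with h1 | h1
    · rw [max_eq_right (by linarith)]
      have h1' : -a * μ ≤ 1 := (le_div_iff₀ hμ).mp h1
      have hax : μ * a * x ≤ |x| := by
        rcases abs_cases x with ⟨hx, hx'⟩ | ⟨hx, hx'⟩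
        · nlinarith [mul_nonneg (mul_nonneg hμ.le (neg_nonneg.mpr ha.le)) hx']
        · nlinarith
      simp only [mul_zero, neg_zero, sub_zero, abs_zero]
      nlinarith
    · rw [max_eq_left (by linarith)]
      have heq : (-1:ℝ) * (-a - 1/μ) = a + 1/μ := by ring
      rw [heq, abs_of_nonpos (by linarith)]
      have hinv : 0 < 1/μ := one_div_pos.mpr hμ
      have hx : -x ≤ |x| := neg_le_abs x
      have hm : μ * (1/μ) = 1 := by field_simp
      nlinarith
  · subst ha
    simp only [Real.sign_zero, zero_mul, abs_zero]
    nlinarith [abs_nonneg x]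
  · rw [Real.sign_of_pos ha, abs_of_pos ha, one_mul]
    rcases le_or_gt a (1/μ) with h1 | h1
    · rw [max_eq_right (by linarith)]
      have h1' : a * μ ≤ 1 := (le_div_iff₀ hμ).mp h1
      have hax : μ * a * x ≤ |x| := by
        rcases abs_cases x with ⟨hx, hx'⟩ | ⟨hx, hx'⟩
        · nlinarith
        · nlinarith [mul_nonneg (mul_nonneg hμ.le ha.le) (neg_nonneg.mpr hx'.le)]
      simp only [mul_zero, neg_zero, sub_zero, abs_zero]
      nlinarith
    · rw [max_eq_left (by linarith)]
      have hinv : 0 < 1/μ := one_div_pos.mpr hμ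
      rw [abs_of_nonneg (by linarith)]
      have hx : x ≤ |x| := le_abs_self x
      have hm : μ * (1/μ) = 1 := by field_simp
      nlinarith

/-- For `w ∈ ℝ^N` and `μ > 0`, the function
`h(g) = (μ/2)·‖w − g‖₂² + ‖g‖₁` has a unique global minimizer, given
componentwise by soft-thresholding with threshold `1/μ`. -/
theorem soft_thresholding_unique_minimizer
    (N : ℕ) (hN : 0 < N) (w : Fin N → ℝ) (μ : ℝ) (hμ : 0 < μ) :
    let h : (Fin N → ℝ) → ℝ := fun g => μ / 2 * ∑ i, (w i - g i) ^ 2 + ∑ i, |g i|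
    let gstar : Fin N → ℝ := fun i => Real.sign (w i) * max (|w i| - 1 / μ) 0
    (∀ g, h gstar ≤ h g) ∧
    (∀ g, (∀ g', h g ≤ h g') → g = gstar) ∧
    (∀ i, w i ≠ 0 → gstar i = w i * max (1 - 1 / (μ * |w i|)) 0) ∧
    (∀ i, w i = 0 → gstar i = 0) := by
  intro h gstar
  have hsum : ∀ g, h g = ∑ i, (μ/2 * (w i - g i)^2 + |g i|) := by
    intro g
    simp only [h, Finset.mul_sum, Finset.sum_add_distrib]
  have hkey : ∀ g : Fin N → ℝ, h gstar + μ/2 * ∑ i, (g i - gstar i)^2 ≤ h g := by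
    intro g
    rw [hsum g, hsum gstar, Finset.mul_sum, ← Finset.sum_add_distrib]
    refine Finset.sum_le_sum fun i _ => ?_
    have := scalar_key μ (w i) (g i) hμ
    simp only [gstar]
    linarith
  refine ⟨?_, ?_, ?_, ?_⟩
  · intro g
    have hk := hkey g
    have hnn : 0 ≤ μ/2 * ∑ i, (g i - gstar i)^2 := by
      apply mul_nonneg (by linarith)
      exact Finset.sum_nonneg fun i _ => sq_nonneg _
    exact le_trans (le_add_of_nonneg_right hnn) hk
  · intro g hg
    have h1 := hg gstar
    have h2 := hkey g
    have hzero : ∑ i, (g i - gstar i)^2 = 0 := by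
      have hnn : 0 ≤ ∑ i, (g i - gstar i)^2 :=
        Finset.sum_nonneg fun i _ => sq_nonneg _
      have hle : μ/2 * ∑ i, (g i - gstar i)^2 ≤ 0 := by
        have := sub_nonneg.mpr h1
        have h3 : μ/2 * ∑ i, (g i - gstar i)^2 ≤ h g - h gstar := by
          exact le_sub_right_of_add_le (by linarith [h2])
        calc μ/2 * ∑ i, (g i - gstar i)^2 ≤ h g - h gstar := h3
          _ ≤ 0 := by linarith [h1]
      have hpos : 0 < μ/2 := by linarith
      nlinarith
    funext i
    have := (Finset.sum_eq_zero_iff_of_nonneg (fun i _ => sq_nonneg (g i - gstar i))).mp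
      hzero i (Finset.mem_univ i)
    have := pow_eq_zero_iff (n := 2) (by norm_num) |>.mp this
    linarith [sub_eq_zero.mp this]
  · intro i hi
    have habs : 0 < |w i| := abs_pos.mpr hi
    have hmax : max (|w i| - 1/μ) 0 = |w i| * max (1 - 1/(μ * |w i|)) 0 := by
      rw [mul_max_of_nonneg _ _ habs.le, mul_zero]
      congr 1
      field_simp
    have hsgn : Real.sign (w i) * |w i| = w i := by
      rcases lt_trichotomy (w i) 0 with hw | hw | hw
      · rw [Real.sign_of_neg hw, abs_of_neg hw]; ring
      · exact absurd hw hi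
      · rw [Real.sign_of_pos hw, abs_of_pos hw, one_mul]
    show Real.sign (w i) * max (|w i| - 1/μ) 0 = _
    rw [hmax, ← mul_assoc, hsgn]
  · intro i hi
    show Real.sign (w i) * max (|w i| - 1/μ) 0 = 0
    rw [hi, Real.sign_zero, zero_mul]
end

section
/- Let M be a positive natural number, let r ∈ ℝ^M with r ≠ 0, let μ₂ > 0, μ₃ > 0 and s ∈ ℝ, and set E = ‖r‖₂², p = (μ₂ − 2μ₃ s)/(2 μ₃ E), q = −μ₂/(2 μ₃ E). Then a vector e ∈ ℝ^M satisfies the equation (1 + (2μ₃/μ₂)·(‖e‖₂² − s))·e = r if and only if there exists γ ∈ ℝ with γ³ + p·γ + q = 0 and e = γ·r. -/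
/-! The factor in front of `e` is a scalar, so every solution is a multiple `γ • r` of `r`,
with `γ` the reciprocal of that factor (which cannot vanish since `r ≠ 0`). Substituting
`e = γ • r` turns the vector equation into the scalar equation
`(1 + (2μ₃/μ₂)(γ²E − s)) γ = 1`, which after clearing denominators is the depressed cubic. -/

theorem smul_self_eq_iff_exists_smul {K V : Type*} [Field K] [AddCommGroup V] [Module K V]
    (f : V → K) {r : V} (hr : r ≠ 0) (e : V) :
    f e • e = r ↔ ∃ γ : K, f (γ • r) * γ = 1 ∧ e = γ • r := by
  constructor
  · intro h
    have hfe : f e ≠ 0 := by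
      intro h0
      exact hr (by rw [← h, h0, zero_smul])
    have he : e = (f e)⁻¹ • r := by rw [← h, smul_smul, inv_mul_cancel₀ hfe, one_smul]
    refine ⟨(f e)⁻¹, ?_, he⟩
    rw [← he, mul_inv_cancel₀ hfe]
  · rintro ⟨γ, hγ, rfl⟩
    rw [smul_smul, hγ, one_smul]

theorem Fintype.sum_sq_smul {ι : Type*} [Fintype ι] (γ : ℝ) (r : ι → ℝ) :
    ∑ i, (γ • r) i ^ 2 = γ ^ 2 * ∑ i, r i ^ 2 := by
  simp [Finset.mul_sum, mul_pow]

theorem Fintype.sum_sq_pos_of_ne_zero {ι : Type*} [Fintype ι] {r : ι → ℝ} (hr : r ≠ 0) :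
    0 < ∑ i, r i ^ 2 := by
  obtain ⟨i, hi⟩ := Function.ne_iff.mp hr
  exact Finset.sum_pos' (fun j _ => sq_nonneg _)
    ⟨i, Finset.mem_univ i, pow_two_pos_of_ne_zero hi⟩

theorem stationarity_scalar_iff_cubic {μ₂ μ₃ E : ℝ} (hμ₂ : μ₂ ≠ 0) (hμ₃ : μ₃ ≠ 0) (hE : E ≠ 0)
    (s γ : ℝ) :
    (1 + 2 * μ₃ / μ₂ * (γ ^ 2 * E - s)) * γ = 1 ↔
      γ ^ 3 + (μ₂ - 2 * μ₃ * s) / (2 * μ₃ * E) * γ + -μ₂ / (2 * μ₃ * E) = 0 := by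
  field_simp
  constructor <;> intro h <;> linear_combination h

theorem noise_update_stationarity_iff_cubic_general
    (M : ℕ) (r : Fin M → ℝ) (hr : r ≠ 0)
    (μ₂ μ₃ : ℝ) (hμ₂ : 0 < μ₂) (hμ₃ : 0 < μ₃) (s : ℝ) :
    let E : ℝ := ∑ i, (r i) ^ 2
    let p : ℝ := (μ₂ - 2 * μ₃ * s) / (2 * μ₃ * E)
    let q : ℝ := -μ₂ / (2 * μ₃ * E)
    ∀ e : Fin M → ℝ,
      (1 + (2 * μ₃ / μ₂) * ((∑ i, (e i) ^ 2) - s)) • e = r ↔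
      ∃ γ : ℝ, γ ^ 3 + p * γ + q = 0 ∧ e = γ • r := by
  intro E p q e
  have hE : E ≠ 0 := (Fintype.sum_sq_pos_of_ne_zero hr).ne'
  rw [smul_self_eq_iff_exists_smul (fun x => 1 + 2 * μ₃ / μ₂ * ((∑ i, x i ^ 2) - s)) hr]
  refine exists_congr fun γ => and_congr_left' ?_
  rw [Fintype.sum_sq_smul]
  exact stationarity_scalar_iff_cubic hμ₂.ne' hμ₃.ne' hE s γ

/-- With `r ≠ 0`, `E = ‖r‖₂²`, `p = (μ₂ − 2μ₃ s)/(2μ₃E)` and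
`q = −μ₂/(2μ₃E)`, a vector `e` satisfies
`(1 + (2μ₃/μ₂)(‖e‖₂² − s))·e = r` iff `e = γ·r` for some real root `γ` of the
depressed cubic `γ³ + p·γ + q = 0`. -/
theorem noise_update_stationarity_iff_cubic
    (M : ℕ) (hM : 0 < M) (r : Fin M → ℝ) (hr : r ≠ 0)
    (μ₂ μ₃ : ℝ) (hμ₂ : 0 < μ₂) (hμ₃ : 0 < μ₃) (s : ℝ) :
    let E : ℝ := ∑ i, (r i) ^ 2
    let p : ℝ := (μ₂ - 2 * μ₃ * s) / (2 * μ₃ * E)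
    let q : ℝ := -μ₂ / (2 * μ₃ * E)
    ∀ e : Fin M → ℝ,
      (1 + (2 * μ₃ / μ₂) * ((∑ i, (e i) ^ 2) - s)) • e = r ↔
      ∃ γ : ℝ, γ ^ 3 + p * γ + q = 0 ∧ e = γ • r :=
  noise_update_stationarity_iff_cubic_general M r hr μ₂ μ₃ hμ₂ hμ₃ s
end

section
/- Let E > 0, μ₂ > 0, μ₃ > 0 and s ∈ ℝ, and define f : ℝ → ℝ by f(γ) = (μ₂ E/2)·(γ − 1)² + (μ₃/2)·(E γ² − s)². Set p = (μ₂ − 2μ₃ s)/(2 μ₃ E) and q = −μ₂/(2 μ₃ E), and let γ* be the largest real root of the cubic γ³ + p·γ + q = 0. Then γ* is a global minimizer of f over ℝ, i.e., f(γ*) ≤ f(γ) for all γ ∈ ℝ. -/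
/-- Auxiliary: a cubic `x³ + ax + b` with `b < 0` has a positive root. -/
lemma cubic_has_pos_root (a b : ℝ) (hb : b < 0) :
    ∃ r : ℝ, 0 < r ∧ r ^ 3 + a * r + b = 0 := by
  obtain ⟨M, hM1, hcM⟩ : ∃ M : ℝ, 1 ≤ M ∧ 0 < M ^ 3 + a * M + b := by
    refine ⟨1 + |a| + |b|, by nlinarith [abs_nonneg a, abs_nonneg b], ?_⟩
    set M : ℝ := 1 + |a| + |b| with hM
    have hM1 : (1:ℝ) ≤ M := by
      have := abs_nonneg a; have := abs_nonneg b; linarith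
    have h2 : M * M ≤ M ^ 3 := by nlinarith
    have h3 : M * M = M + |a| * M + |b| * M := by rw [hM]; ring
    have h4 : -(|a| * M) ≤ a * M := by
      nlinarith [neg_abs_le a, abs_nonneg a]
    have h5 : -|b| ≤ b := neg_abs_le b
    have h6 : |b| ≤ |b| * M := by nlinarith [abs_nonneg b]
    nlinarith
  have hM0 : (0:ℝ) ≤ M := by linarith
  have hcont : Continuous fun x : ℝ => x ^ 3 + a * x + b := by fun_prop
  have hivt := intermediate_value_Icc hM0 hcont.continuousOn
  have h0mem : (0:ℝ) ∈ Set.Icc ((0:ℝ) ^ 3 + a * 0 + b) (M ^ 3 + a * M + b) := by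
    constructor
    · simp only [zero_pow, mul_zero, zero_add]; norm_num; linarith
    · linarith
  obtain ⟨r, hr, hcr⟩ := hivt h0mem
  refine ⟨r, ?_, hcr⟩
  rcases lt_or_eq_of_le hr.1 with h | h
  · exact h
  · exfalso; rw [← h] at hcr; simp at hcr; linarith

/-- The largest real root of the depressed cubic
`γ³ + pγ + q = 0` (with `p, q` as in the noise-update subproblem) is a global
minimizer of `f(γ) = (μ₂E/2)(γ−1)² + (μ₃/2)(Eγ²−s)²`. -/
theorem noise_update_largest_root_minimizes
    (E μ₂ μ₃ s : ℝ) (hE : 0 < E) (hμ₂ : 0 < μ₂) (hμ₃ : 0 < μ₃)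
    (γstar : ℝ)
    (hroot : γstar ^ 3 + (μ₂ - 2 * μ₃ * s) / (2 * μ₃ * E) * γstar
      + (-μ₂ / (2 * μ₃ * E)) = 0)
    (hmax : ∀ γ : ℝ, γ ^ 3 + (μ₂ - 2 * μ₃ * s) / (2 * μ₃ * E) * γ
      + (-μ₂ / (2 * μ₃ * E)) = 0 → γ ≤ γstar) :
    ∀ γ : ℝ,
      μ₂ * E / 2 * (γstar - 1) ^ 2 + μ₃ / 2 * (E * γstar ^ 2 - s) ^ 2 ≤
      μ₂ * E / 2 * (γ - 1) ^ 2 + μ₃ / 2 * (E * γ ^ 2 - s) ^ 2 := by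
  have hden : (0:ℝ) < 2 * μ₃ * E := by positivity
  have hne : (2 * μ₃ * E) ≠ 0 := ne_of_gt hden
  -- cleared-denominator form of the root equation
  have H : 2 * μ₃ * E * γstar ^ 3 + (μ₂ - 2 * μ₃ * s) * γstar - μ₂ = 0 := by
    have h := hroot
    field_simp at h
    linarith
  have hbneg : -μ₂ / (2 * μ₃ * E) < 0 := div_neg_of_neg_of_pos (by linarith) hden
  obtain ⟨r, hrpos, hcr⟩ := cubic_has_pos_root ((μ₂ - 2 * μ₃ * s) / (2 * μ₃ * E))
    (-μ₂ / (2 * μ₃ * E)) hbneg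
  have htpos : 0 < γstar := lt_of_lt_of_le hrpos (hmax r hcr)
  -- K ≥ 0
  have hKeq : γstar * (2 * μ₃ * E * γstar ^ 2 + μ₂ - 2 * μ₃ * s) = μ₂ := by
    nlinarith [H]
  have hK : 0 ≤ 2 * μ₃ * E * γstar ^ 2 + μ₂ - 2 * μ₃ * s := by
    nlinarith [hKeq, htpos, hμ₂]
  intro γ
  -- key identity
  have key : μ₂ * E / 2 * (γ - 1) ^ 2 + μ₃ / 2 * (E * γ ^ 2 - s) ^ 2
      - (μ₂ * E / 2 * (γstar - 1) ^ 2 + μ₃ / 2 * (E * γstar ^ 2 - s) ^ 2)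
      = E / 2 * (γ - γstar) ^ 2
        * (μ₃ * E * (γ + γstar) ^ 2 + (2 * μ₃ * E * γstar ^ 2 + μ₂ - 2 * μ₃ * s)) := by
    linear_combination (E * (γ - γstar)) * H
  have hfac : 0 ≤ E / 2 * (γ - γstar) ^ 2
      * (μ₃ * E * (γ + γstar) ^ 2 + (2 * μ₃ * E * γstar ^ 2 + μ₂ - 2 * μ₃ * s)) := by
    apply mul_nonneg (mul_nonneg (by positivity) (sq_nonneg _))
    have : 0 ≤ μ₃ * E * (γ + γstar) ^ 2 := by positivity
    linarith
  linarith
end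

section
/- Let M be a positive natural number, let r ∈ ℝ^M with r ≠ 0, let μ₂ > 0, μ₃ > 0 and s ∈ ℝ, and define F : ℝ^M → ℝ by F(e) = (μ₂/2)·‖e − r‖₂² + (μ₃/2)·(‖e‖₂² − s)². Set E = ‖r‖₂², p = (μ₂ − 2μ₃ s)/(2 μ₃ E), q = −μ₂/(2 μ₃ E), and let γ* be the largest real root of the cubic γ³ + p·γ + q = 0. Then the vector e* = γ*·r is a global minimizer of F over ℝ^M, i.e., F(γ*·r) ≤ F(e) for all e ∈ ℝ^M. -/
/-- With `r ≠ 0`, `F(e) = (μ₂/2)‖e − r‖₂² + (μ₃/2)(‖e‖₂² − s)²`,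
`E = ‖r‖₂²` and `γ*` the largest real root of the depressed cubic
`γ³ + pγ + q = 0`, the vector `e* = γ*·r` is a global minimizer of `F`. -/
theorem noise_update_global_minimizer
    (M : ℕ) (hM : 0 < M) (r : Fin M → ℝ) (hr : r ≠ 0)
    (μ₂ μ₃ : ℝ) (hμ₂ : 0 < μ₂) (hμ₃ : 0 < μ₃) (s : ℝ) :
    let F : (Fin M → ℝ) → ℝ := fun e =>
      μ₂ / 2 * ∑ i, (e i - r i) ^ 2 + μ₃ / 2 * ((∑ i, (e i) ^ 2) - s) ^ 2
    let E : ℝ := ∑ i, (r i) ^ 2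
    let p : ℝ := (μ₂ - 2 * μ₃ * s) / (2 * μ₃ * E)
    let q : ℝ := -μ₂ / (2 * μ₃ * E)
    ∀ γstar : ℝ,
      γstar ^ 3 + p * γstar + q = 0 →
      (∀ γ : ℝ, γ ^ 3 + p * γ + q = 0 → γ ≤ γstar) →
      ∀ e : Fin M → ℝ, F (γstar • r) ≤ F e := by
  intro F E p q t hroot hmax e
  have hF : ∀ x : Fin M → ℝ, F x =
      μ₂ / 2 * ∑ i, (x i - r i) ^ 2 + μ₃ / 2 * ((∑ i, (x i) ^ 2) - s) ^ 2 := fun _ => rfl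
  have hEdef : E = ∑ i, (r i) ^ 2 := rfl
  have hp : p = (μ₂ - 2 * μ₃ * s) / (2 * μ₃ * E) := rfl
  have hq : q = -μ₂ / (2 * μ₃ * E) := rfl
  -- E > 0
  have hE : 0 < E := by
    obtain ⟨i, hi⟩ := Function.ne_iff.mp hr
    rw [hEdef]
    exact Finset.sum_pos' (fun j _ => sq_nonneg _)
      ⟨i, Finset.mem_univ i, pow_pos (abs_pos.mpr hi) 2 |>.trans_le (by rw [sq_abs])⟩
  have hden : (2 * μ₃ * E) ≠ 0 := by positivity
  -- cleared cubic relation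
  have hcub : 2 * μ₃ * E * t ^ 3 + (μ₂ - 2 * μ₃ * s) * t - μ₂ = 0 := by
    have h := hroot
    rw [hp, hq] at h
    field_simp at h
    linarith [h]
  -- q < 0
  have hqneg : q < 0 := by
    rw [hq]
    exact div_neg_of_neg_of_pos (by linarith) (by positivity)
  -- t > 0, via IVT on the cubic
  have ht : 0 < t := by
    set B : ℝ := 1 + |p| + |q| with hB
    have hB1 : (1:ℝ) ≤ B := by rw [hB]; linarith [abs_nonneg p, abs_nonneg q]
    have hfB : 0 < B ^ 3 + p * B + B * 0 + q := by
      have h1 : -|p| ≤ p := neg_abs_le p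
      have h2 : -|q| ≤ q := neg_abs_le q
      have h3 : 0 ≤ |p| := abs_nonneg p
      have h4 : 0 ≤ |q| := abs_nonneg q
      nlinarith [sq_nonneg (|p| + |q|), mul_nonneg h3 h4, sq_nonneg B]
    have hcont : ContinuousOn (fun x : ℝ => x ^ 3 + p * x + q) (Set.Icc 0 B) := by
      fun_prop
    have hsub := intermediate_value_Icc (by linarith : (0:ℝ) ≤ B) hcont
    have h0mem : (0:ℝ) ∈ Set.Icc ((fun x : ℝ => x ^ 3 + p * x + q) 0)
        ((fun x : ℝ => x ^ 3 + p * x + q) B) := by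
      constructor <;> simp <;> nlinarith
    obtain ⟨x, hx, hfx⟩ := hsub h0mem
    have hxroot : x ^ 3 + p * x + q = 0 := hfx
    have hxpos : 0 < x := by
      rcases lt_or_eq_of_le hx.1 with h | h
      · exact h
      · exfalso; rw [← h] at hxroot; simp at hxroot; linarith
    exact lt_of_lt_of_le hxpos (hmax x hxroot)
  -- positivity of the quadratic coefficient
  have hQ : 0 < 2 * μ₃ * E * t ^ 2 + (μ₂ - 2 * μ₃ * s) := by
    nlinarith [hcub, ht, hμ₂]
  -- abbreviations for e
  set n : ℝ := ∑ i, (e i) ^ 2 with hn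
  set c : ℝ := ∑ i, e i * r i with hc
  have hn0 : 0 ≤ n := Finset.sum_nonneg fun i _ => sq_nonneg _
  have hcs : c ^ 2 ≤ n * E := by
    rw [hn, hc, hEdef]
    exact Finset.sum_mul_sq_le_sq_mul_sq _ _ _
  set γ : ℝ := Real.sqrt (n / E) with hγ
  have hγ0 : 0 ≤ γ := Real.sqrt_nonneg _
  have hγ2 : γ ^ 2 * E = n := by
    rw [hγ, Real.sq_sqrt (div_nonneg hn0 hE.le)]
    field_simp
  have hcγ : c ≤ γ * E := by
    have h1 : c ≤ Real.sqrt (c ^ 2) := by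
      rw [Real.sqrt_sq_eq_abs]; exact le_abs_self c
    have h2 : Real.sqrt (c ^ 2) ≤ Real.sqrt (n * E) := Real.sqrt_le_sqrt hcs
    have h3 : Real.sqrt (n * E) = γ * E := by
      rw [show n * E = (γ * E) ^ 2 by rw [← hγ2]; ring, Real.sqrt_sq (by positivity)]
    linarith
  -- expansions
  have h1 : ∑ i, (e i - r i) ^ 2 = n - 2 * c + E := by
    have hpt : ∀ i, (e i - r i) ^ 2 = e i ^ 2 - 2 * (e i * r i) + r i ^ 2 :=
      fun i => by ring
    rw [hn, hc, hEdef]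
    simp_rw [hpt, Finset.sum_add_distrib, Finset.sum_sub_distrib, ← Finset.mul_sum]
  have h2 : ∑ i, ((t • r) i) ^ 2 = t ^ 2 * E := by
    simp_rw [Pi.smul_apply, smul_eq_mul]
    rw [hEdef, Finset.mul_sum]
    exact Finset.sum_congr rfl fun i _ => by ring
  have h3 : ∑ i, ((t • r) i - r i) ^ 2 = (t - 1) ^ 2 * E := by
    simp_rw [Pi.smul_apply, smul_eq_mul]
    rw [hEdef, Finset.mul_sum]
    exact Finset.sum_congr rfl fun i _ => by ring
  rw [hF, hF, h1, h2, h3, ← hn, ← hγ2]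
  clear_value F p q E n c γ
  -- key algebraic identity
  have key : μ₂ / 2 * (γ ^ 2 * E - 2 * (γ * E) + E) + μ₃ / 2 * (γ ^ 2 * E - s) ^ 2
      - (μ₂ / 2 * ((t - 1) ^ 2 * E) + μ₃ / 2 * (t ^ 2 * E - s) ^ 2)
      = (γ - t) ^ 2 * (μ₃ * E ^ 2 * (γ + t) ^ 2 + 2 * μ₃ * E ^ 2 * t ^ 2
          + (μ₂ - 2 * μ₃ * s) * E) / 2 := by
    linear_combination ((γ - t) * E) * hcub
  have hB2 : 0 ≤ (γ - t) ^ 2 * (μ₃ * E ^ 2 * (γ + t) ^ 2 + 2 * μ₃ * E ^ 2 * t ^ 2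
      + (μ₂ - 2 * μ₃ * s) * E) / 2 := by
    have hq1 : 0 ≤ μ₃ * E ^ 2 * (γ + t) ^ 2 := by positivity
    have hq2 : 0 < 2 * μ₃ * E ^ 2 * t ^ 2 + (μ₂ - 2 * μ₃ * s) * E := by
      have h := mul_pos hQ hE
      linarith only [h]
    apply div_nonneg _ (by norm_num)
    exact mul_nonneg (sq_nonneg _) (by linarith only [hq1, hq2])
  have hμc : 0 ≤ μ₂ * (γ * E - c) := mul_nonneg hμ₂.le (by linarith)
  linarith only [key, hB2, hμc]
end
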